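/- Under the proxy-gradient iteration x_{k+1} = x_k − η C u_k where ∇J(x_k) = M_k^T u_k, each M_k satisfies u_k^T M_k u_k ≥ α‖u_k‖², J is L-smooth and bounded below by J*, and 0 < η < 2α/(L C), the sum of squared proxy gradients is bounded: ∑_{k=0}^{K−1} ‖u_k‖² ≤ (J(x_0) − J*) / (ηC(α − LηC/2)) for every K. Consequently, ‖u_k‖ → 0 as k → ∞. -/

import Mathlib

/-!
By the descent lemma for an `L`-smooth function, the step `x - s • u` along a proxy
gradient `u` with `α ‖u‖² ≤ ⟪∇J x, u⟫` lowers `J` by at least `s (α - L s / 2) ‖u‖²`, which is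
positive for `s = η C < 2α / L`. Summing these decreases telescopes to at most `J (x₀) - J*`,
so the series of `‖u_k‖²` converges and its terms tend to zero.
-/

open RealInnerProductSpace

section

variable {E : Type*} [NormedAddCommGroup E] [InnerProductSpace ℝ E] [CompleteSpace E]
  {f : E → ℝ} {L : ℝ}

theorem hasDerivAt_apply_add_smul {a v : E} {t : ℝ} (hf : DifferentiableAt ℝ f (a + t • v)) :
    HasDerivAt (fun s : ℝ => f (a + s • v)) ⟪gradient f (a + t • v), v⟫ t := by
  have hline : HasDerivAt (fun s : ℝ => a + s • v) v t := by
    simpa using ((hasDerivAt_id t).smul_const v).const_add a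
  have := hf.hasGradientAt.hasFDerivAt.comp_hasDerivAt t hline
  simp only [InnerProductSpace.toDual_apply_apply] at this
  exact this

theorem le_add_inner_gradient_add_of_lipschitz_gradient (hf : Differentiable ℝ f)
    (hLip : ∀ a b, ‖gradient f a - gradient f b‖ ≤ L * ‖a - b‖) (a b : E) :
    f b ≤ f a + ⟪gradient f a, b - a⟫ + L / 2 * ‖b - a‖ ^ 2 := by
  -- Fence `s ↦ f (a + s • v)` on `[0, 1]` by the quadratic whose derivative dominates its own.
  set v := b - a
  have hderiv_le : ∀ t ∈ Set.Ico (0 : ℝ) 1,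
      ⟪gradient f (a + t • v), v⟫ ≤ ⟪gradient f a, v⟫ + L * t * ‖v‖ ^ 2 := by
    intro t ht
    have hgrad : ‖gradient f (a + t • v) - gradient f a‖ ≤ L * (t * ‖v‖) := by
      simpa [norm_smul, abs_of_nonneg ht.1] using hLip (a + t • v) a
    calc ⟪gradient f (a + t • v), v⟫
        = ⟪gradient f a, v⟫ + ⟪gradient f (a + t • v) - gradient f a, v⟫ := by
          rw [inner_sub_left]; ring
      _ ≤ ⟪gradient f a, v⟫ + ‖gradient f (a + t • v) - gradient f a‖ * ‖v‖ := by
          gcongr; exact real_inner_le_norm _ _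
      _ ≤ ⟪gradient f a, v⟫ + L * (t * ‖v‖) * ‖v‖ := by gcongr
      _ = ⟪gradient f a, v⟫ + L * t * ‖v‖ ^ 2 := by ring
  have hB : ∀ t : ℝ, HasDerivAt (fun s => f a + s * ⟪gradient f a, v⟫ + L / 2 * s ^ 2 * ‖v‖ ^ 2)
      (⟪gradient f a, v⟫ + L * t * ‖v‖ ^ 2) t := by
    intro t
    refine ((((hasDerivAt_id t).mul_const ⟪gradient f a, v⟫).const_add (f a)).add
      (((hasDerivAt_pow 2 t).const_mul (L / 2)).mul_const (‖v‖ ^ 2))).congr_deriv ?_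
    simp only [Nat.cast_ofNat]; ring
  have hfence := image_le_of_deriv_right_le_deriv_boundary
    (f := fun s : ℝ => f (a + s • v)) (a := 0) (b := 1)
    (fun t _ => (hasDerivAt_apply_add_smul (hf _)).continuousAt.continuousWithinAt)
    (fun t _ => (hasDerivAt_apply_add_smul (hf _)).hasDerivWithinAt)
    (by simp) (fun t _ => (hB t).continuousAt.continuousWithinAt)
    (fun t _ => (hB t).hasDerivWithinAt) hderiv_le (Set.right_mem_Icc.2 zero_le_one)
  simpa [v] using hfence

theorem le_sub_mul_norm_sq_of_descent_step (hf : Differentiable ℝ f)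
    (hLip : ∀ a b, ‖gradient f a - gradient f b‖ ≤ L * ‖a - b‖) {a u : E} {α s : ℝ}
    (hs : 0 ≤ s) (halign : α * ‖u‖ ^ 2 ≤ ⟪gradient f a, u⟫) :
    f (a - s • u) ≤ f a - s * (α - L * s / 2) * ‖u‖ ^ 2 := by
  have hdescent := le_add_inner_gradient_add_of_lipschitz_gradient hf hLip a (a - s • u)
  rw [sub_sub_cancel_left, inner_neg_right, real_inner_smul_right, norm_neg, norm_smul,
    Real.norm_of_nonneg hs] at hdescent
  nlinarith [mul_le_mul_of_nonneg_left halign hs]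

end

theorem sum_range_le_div_of_mul_le_sub {a φ : ℕ → ℝ} {c m : ℝ} (hc : 0 < c)
    (hstep : ∀ k, c * a k ≤ φ k - φ (k + 1)) (hm : ∀ k, m ≤ φ k) (K : ℕ) :
    ∑ k ∈ Finset.range K, a k ≤ (φ 0 - m) / c := by
  rw [le_div_iff₀ hc, Finset.sum_mul]
  calc ∑ k ∈ Finset.range K, a k * c
      ≤ ∑ k ∈ Finset.range K, (φ k - φ (k + 1)) :=
        Finset.sum_le_sum fun k _ => by linarith [hstep k]
    _ = φ 0 - φ K := Finset.sum_range_sub' φ K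
    _ ≤ φ 0 - m := by linarith [hm K]

theorem tendsto_norm_zero_of_sum_range_sq_le {E : Type*} [SeminormedAddCommGroup E]
    {u : ℕ → E} {B : ℝ} (hB : ∀ K, ∑ k ∈ Finset.range K, ‖u k‖ ^ 2 ≤ B) :
    Filter.Tendsto (fun k => ‖u k‖) Filter.atTop (nhds 0) := by
  have hsq : Filter.Tendsto (fun k => ‖u k‖ ^ 2) Filter.atTop (nhds 0) :=
    (summable_of_sum_range_le (fun k => by positivity) hB).tendsto_atTop_zero
  simpa [Real.sqrt_sq (norm_nonneg _)] using hsq.sqrt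

theorem proxy_gradient_convergence_general {d : ℕ} (L α η C Jstar : ℝ)
    (hL : 0 < L) (hC : 0 < C) (hη : 0 < η) (hη' : η < 2 * α / (L * C))
    (J : EuclideanSpace ℝ (Fin d) → ℝ) (hJ : Differentiable ℝ J)
    (hLip : ∀ a b : EuclideanSpace ℝ (Fin d), ‖gradient J a - gradient J b‖ ≤ L * ‖a - b‖)
    (hbound : ∀ z, Jstar ≤ J z)
    (x u : ℕ → EuclideanSpace ℝ (Fin d))
    (M : ℕ → EuclideanSpace ℝ (Fin d) →L[ℝ] EuclideanSpace ℝ (Fin d))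
    (hiter : ∀ k, x (k + 1) = x k - (η * C) • u k)
    (hgrad : ∀ k, gradient J (x k) = ContinuousLinearMap.adjoint (M k) (u k))
    (halign : ∀ k, α * ‖u k‖ ^ 2 ≤ ⟪u k, M k (u k)⟫) :
    (∀ K : ℕ, ∑ k ∈ Finset.range K, ‖u k‖ ^ 2 ≤
        (J (x 0) - Jstar) / (η * C * (α - L * η * C / 2))) ∧
      Filter.Tendsto (fun k => ‖u k‖) Filter.atTop (nhds 0) := by
  have hmargin : 0 < α - L * η * C / 2 := by
    linarith [(lt_div_iff₀ (mul_pos hL hC)).mp hη']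
  have hdecrease : ∀ k, η * C * (α - L * η * C / 2) * ‖u k‖ ^ 2 ≤ J (x k) - J (x (k + 1)) := by
    intro k
    have hgrad_align : α * ‖u k‖ ^ 2 ≤ ⟪gradient J (x k), u k⟫ := by
      rw [hgrad, ContinuousLinearMap.adjoint_inner_left]
      exact halign k
    have hstep := le_sub_mul_norm_sq_of_descent_step hJ hLip (mul_pos hη hC).le hgrad_align
    rw [hiter]
    linarith [hstep, show L * (η * C) / 2 = L * η * C / 2 by ring]
  have hsum := sum_range_le_div_of_mul_le_sub (by positivity) hdecrease fun k => hbound (x k)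
  exact ⟨hsum, tendsto_norm_zero_of_sum_range_sq_le hsum⟩

/-- Convergence of the proxy-gradient iteration `x_{k+1} = x_k − η C u_k` where
`∇J(x_k) = M_kᵀ u_k`, each `M_k` satisfies `u_kᵀ M_k u_k ≥ α ‖u_k‖²`, `J` is `L`-smooth and
bounded below by `J*`, and `0 < η < 2α/(L C)`: the squared proxy gradients are summable with
`∑_{k<K} ‖u_k‖² ≤ (J(x_0) − J*) / (η C (α − L η C / 2))`, hence `‖u_k‖ → 0`. -/
theorem proxy_gradient_convergence {d : ℕ} (L α η C Jstar : ℝ)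
    (hL : 0 < L) (hα : 0 < α) (hC : 0 < C) (hη : 0 < η) (hη' : η < 2 * α / (L * C))
    (J : EuclideanSpace ℝ (Fin d) → ℝ) (hJ : Differentiable ℝ J)
    (hLip : ∀ a b : EuclideanSpace ℝ (Fin d), ‖gradient J a - gradient J b‖ ≤ L * ‖a - b‖)
    (hbound : ∀ z, Jstar ≤ J z)
    (x u : ℕ → EuclideanSpace ℝ (Fin d))
    (M : ℕ → EuclideanSpace ℝ (Fin d) →L[ℝ] EuclideanSpace ℝ (Fin d))
    (hiter : ∀ k, x (k + 1) = x k - (η * C) • u k)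
    (hgrad : ∀ k, gradient J (x k) = ContinuousLinearMap.adjoint (M k) (u k))
    (halign : ∀ k, α * ‖u k‖ ^ 2 ≤ ⟪u k, M k (u k)⟫) :
    (∀ K : ℕ, ∑ k ∈ Finset.range K, ‖u k‖ ^ 2 ≤
        (J (x 0) - Jstar) / (η * C * (α - L * η * C / 2))) ∧
      Filter.Tendsto (fun k => ‖u k‖) Filter.atTop (nhds 0) :=
  proxy_gradient_convergence_general L α η C Jstar hL hC hη hη' J hJ hLip hbound x u M hiter hgrad
    halign
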